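/- The Cesàro matrix operator on ℓ², which sends a sequence (aₙ) to the sequence of its Cesàro means ((a₀+⋯+aₙ)/(n+1)), is a bounded linear operator with operator norm equal to 2. -/
import Mathlib

open Finset Real
open scoped ENNReal NNReal

/-- Finite discrete Hardy inequality for nonnegative sequences. -/
lemma hardy_fin (b : ℕ → ℝ) (hb : ∀ n, 0 ≤ b n) (N : ℕ) :
    ∑ n ∈ range N, ((∑ k ∈ range (n + 1), b k) / (n + 1)) ^ 2
      ≤ 4 * ∑ n ∈ range N, (b n) ^ 2 := by
  set A : ℕ → ℝ := fun n => (∑ k ∈ range (n + 1), b k) / (n + 1) with hA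
  have hApos : ∀ n, 0 ≤ A n := fun n =>
    div_nonneg (Finset.sum_nonneg fun k _ => hb k) (by positivity)
  have key : ∀ n : ℕ, (n : ℝ) * A (n - 1) + b n = ((n : ℝ) + 1) * A n := by
    intro n
    cases n with
    | zero => simp [hA]
    | succ m =>
      have h1 : A m * ((m : ℝ) + 1) = ∑ k ∈ range (m + 1), b k := by
        rw [hA]; exact div_mul_cancel₀ _ (by positivity)
      have h2 : A (m + 1) * ((m : ℝ) + 1 + 1) = ∑ k ∈ range (m + 2), b k := by
        rw [hA]; push_cast; exact div_mul_cancel₀ _ (by positivity)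
      simp only [Nat.add_sub_cancel]
      push_cast
      rw [Finset.sum_range_succ] at h2
      nlinarith [h1, h2]
  have point : ∀ n : ℕ, A n ^ 2 - 2 * b n * A n
      ≤ (n : ℝ) * A (n - 1) ^ 2 - ((n : ℝ) + 1) * A n ^ 2 := by
    intro n
    have hk := key n
    have h2 : 2 * A n * ((n : ℝ) * A (n - 1) + b n) = 2 * A n * (((n : ℝ) + 1) * A n) := by
      rw [hk]
    nlinarith [h2, mul_nonneg (Nat.cast_nonneg (α := ℝ) n) (sq_nonneg (A (n - 1) - A n))]
  have step1 : ∑ n ∈ range N, A n ^ 2 ≤ 2 * ∑ n ∈ range N, b n * A n := by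
    have htel := Finset.sum_range_sub' (fun m : ℕ => (m : ℝ) * A (m - 1) ^ 2) N
    have hsum : ∑ n ∈ range N, (A n ^ 2 - 2 * b n * A n)
        ≤ ∑ i ∈ range N, ((i : ℝ) * A (i - 1) ^ 2 - ((i : ℝ) + 1) * A i ^ 2) := by
      refine Finset.sum_le_sum fun n _ => ?_
      simpa [Nat.add_sub_cancel] using point n
    have hend : (0 : ℝ) * A (0 - 1) ^ 2 - (N : ℝ) * A (N - 1) ^ 2 ≤ 0 := by
      have : (0:ℝ) ≤ (N : ℝ) * A (N - 1) ^ 2 := by positivity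
      linarith
    push_cast at htel
    rw [htel] at hsum
    rw [Finset.sum_sub_distrib] at hsum
    rw [Finset.mul_sum]
    have hrw : ∑ x ∈ range N, 2 * (b x * A x) = ∑ x ∈ range N, 2 * b x * A x :=
      Finset.sum_congr rfl fun x _ => by ring
    rw [hrw]
    push_cast at hend
    linarith [hsum, hend]
  have CS := Finset.sum_mul_sq_le_sq_mul_sq (range N) b A
  have hPnn : (0:ℝ) ≤ ∑ n ∈ range N, A n ^ 2 :=
    Finset.sum_nonneg fun n _ => sq_nonneg _
  have hQnn : (0:ℝ) ≤ ∑ n ∈ range N, b n ^ 2 :=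
    Finset.sum_nonneg fun n _ => sq_nonneg _
  have hSnn : (0:ℝ) ≤ ∑ n ∈ range N, b n * A n :=
    Finset.sum_nonneg fun n _ => mul_nonneg (hb n) (hApos n)
  nlinarith [step1, CS, hPnn, hQnn, hSnn,
    mul_le_mul_of_nonneg_left step1 hPnn]

noncomputable section

abbrev H2 := lp (fun _ : ℕ => ℂ) 2

def cesFun (a : ℕ → ℂ) : ℕ → ℂ := fun n => (∑ k ∈ range (n + 1), a k) / ((n : ℂ) + 1)

lemma norm_cesFun (a : ℕ → ℂ) (n : ℕ) :
    ‖cesFun a n‖ ≤ (∑ k ∈ range (n + 1), ‖a k‖) / ((n : ℝ) + 1) := by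
  unfold cesFun
  rw [norm_div]
  have h1 : ‖(n : ℂ) + 1‖ = (n : ℝ) + 1 := by
    have : ((n : ℂ) + 1) = ((n + 1 : ℕ) : ℂ) := by push_cast; ring
    rw [this, Complex.norm_natCast]; push_cast; ring
  rw [h1]
  gcongr
  exact norm_sum_le _ _
lemma cesFun_sq_sum_le (a : H2) (s : Finset ℕ) :
    ∑ n ∈ s, ‖cesFun (a : ∀ _ : ℕ, ℂ) n‖ ^ (2:ℝ) ≤ (2 * ‖a‖) ^ (2:ℝ) := by
  obtain ⟨N, hN⟩ := s.exists_nat_subset_range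
  have h2 : ((2 : ℝ≥0∞)).toReal = (2:ℝ) := by norm_num
  calc ∑ n ∈ s, ‖cesFun (a : ∀ _ : ℕ, ℂ) n‖ ^ (2:ℝ)
      ≤ ∑ n ∈ range N, ‖cesFun (a : ∀ _ : ℕ, ℂ) n‖ ^ (2:ℝ) := by
        refine Finset.sum_le_sum_of_subset_of_nonneg hN fun n _ _ => by positivity
    _ ≤ ∑ n ∈ range N, ((∑ k ∈ range (n + 1), ‖(a : ∀ _ : ℕ, ℂ) k‖) / ((n:ℝ) + 1)) ^ 2 := by
        refine Finset.sum_le_sum fun n _ => ?_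
        rw [Real.rpow_two]
        exact pow_le_pow_left₀ (norm_nonneg _) (norm_cesFun _ n) 2
    _ ≤ 4 * ∑ n ∈ range N, ‖(a : ∀ _ : ℕ, ℂ) n‖ ^ 2 :=
        hardy_fin _ (fun n => norm_nonneg _) N
    _ ≤ 4 * ‖a‖ ^ 2 := by
        gcongr
        have := lp.sum_rpow_le_norm_rpow (p := 2) (E := fun _ : ℕ => ℂ)
          (by norm_num) a (range N)
        rw [h2] at this
        simpa [Real.rpow_two] using this
    _ = (2 * ‖a‖) ^ (2:ℝ) := by
        rw [Real.rpow_two]; ring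

lemma memℓp_cesFun (a : H2) : Memℓp (cesFun (a : ∀ _ : ℕ, ℂ)) 2 :=
  memℓp_gen' (C := (2 * ‖a‖) ^ (2:ℝ)) (by
    intro s
    have h2 : ((2 : ℝ≥0∞)).toReal = (2:ℝ) := by norm_num
    rw [h2]
    exact cesFun_sq_sum_le a s)

def cesLM : H2 →ₗ[ℂ] H2 where
  toFun a := ⟨cesFun (a : ∀ _ : ℕ, ℂ), memℓp_cesFun a⟩
  map_add' a b := by
    apply lp.ext
    funext n
    simp only [lp.coeFn_add, Pi.add_apply]
    show cesFun (((a + b : H2) : ∀ _ : ℕ, ℂ)) n = cesFun _ n + cesFun _ n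
    unfold cesFun
    rw [lp.coeFn_add]
    simp only [Pi.add_apply, Finset.sum_add_distrib]
    ring
  map_smul' c a := by
    apply lp.ext
    funext n
    simp only [RingHom.id_apply, lp.coeFn_smul, Pi.smul_apply]
    show cesFun (((c • a : H2) : ∀ _ : ℕ, ℂ)) n = c • cesFun _ n
    unfold cesFun
    rw [lp.coeFn_smul]
    simp only [Pi.smul_apply, smul_eq_mul, ← Finset.mul_sum]
    ring

lemma cesLM_norm_le (a : H2) : ‖cesLM a‖ ≤ 2 * ‖a‖ := by
  refine lp.norm_le_of_forall_sum_le (by norm_num) (by positivity) fun s => ?_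
  have h2 : ((2 : ℝ≥0∞)).toReal = (2:ℝ) := by norm_num
  rw [h2]
  exact cesFun_sq_sum_le a s

def cesOp : H2 →L[ℂ] H2 := LinearMap.mkContinuous cesLM 2 (by
  intro a
  simpa [two_mul] using cesLM_norm_le a)

lemma cesOp_apply (a : H2) (n : ℕ) :
    (cesOp a : ∀ _ : ℕ, ℂ) n = (∑ k ∈ Finset.range (n + 1), (a : ∀ _ : ℕ, ℂ) k) / ((n : ℂ) + 1) :=
  rfl

lemma cesOp_norm_le : ‖cesOp‖ ≤ 2 :=
  LinearMap.mkContinuous_norm_le _ (by norm_num) _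

lemma bernoulli_neg {x p : ℝ} (hx : 0 ≤ x) (hp1 : -1 ≤ p) (hp2 : p ≤ 0) :
    1 + p * x ≤ (1 + x) ^ p := by
  have hx1 : (0:ℝ) < 1 + x := by linarith
  rcases le_or_gt (1 + p * x) 0 with h | h
  · exact h.trans (Real.rpow_pos_of_pos hx1 p).le
  · have hq := rpow_one_add_le_one_add_mul_self (s := x) (p := -p)
      (by linarith) (by linarith) (by linarith)
    have hB : (0:ℝ) < (1 + x) ^ (-p) := Real.rpow_pos_of_pos hx1 _
    have hmul : (1 + p * x) * (1 + x) ^ (-p) ≤ 1 := by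
      calc (1 + p * x) * (1 + x) ^ (-p) ≤ (1 + p * x) * (1 + -p * x) := by
            exact mul_le_mul_of_nonneg_left hq h.le
        _ = 1 - (p * x) ^ 2 := by ring
        _ ≤ 1 := by nlinarith [sq_nonneg (p * x)]
    have := (le_div_iff₀ hB).2 hmul
    rwa [one_div, ← Real.rpow_neg hx1.le, neg_neg] at this

lemma sum_rpow_lb {s : ℝ} (hs1 : 0 < s) (hs2 : s < 1) (m : ℕ) :
    (((m:ℝ)+1) ^ (1-s) - 1) / (1-s) ≤ ∑ k ∈ range m, ((k:ℝ)+1) ^ (-s) := by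
  induction m with
  | zero => simp
  | succ m ih =>
    rw [Finset.sum_range_succ]
    have hm1 : (0:ℝ) < (m:ℝ) + 1 := by positivity
    have hstep : ((m:ℝ)+1+1) ^ (1-s) ≤ ((m:ℝ)+1) ^ (1-s) + (1-s) * ((m:ℝ)+1) ^ (-s) := by
      have hb := rpow_one_add_le_one_add_mul_self (s := 1/((m:ℝ)+1)) (p := 1-s)
        (by have : (0:ℝ) ≤ 1/((m:ℝ)+1) := by positivity
            linarith) (by linarith) (by linarith)
      have h1 : (1 + 1/((m:ℝ)+1)) = ((m:ℝ)+1+1)/((m:ℝ)+1) := by field_simp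
      rw [h1, Real.div_rpow (by linarith) hm1.le] at hb
      have := mul_le_mul_of_nonneg_right hb (Real.rpow_pos_of_pos hm1 (1-s)).le
      rw [div_mul_cancel₀ _ (by positivity : ((m:ℝ)+1) ^ (1-s) ≠ 0)] at this
      have hpow : ((m:ℝ)+1) ^ (1-s) / ((m:ℝ)+1) = ((m:ℝ)+1) ^ (-s) := by
        rw [eq_comm, show (-s) = (1-s) - 1 by ring, Real.rpow_sub hm1, Real.rpow_one]
      calc ((m:ℝ)+1+1) ^ (1-s) ≤ (1 + (1-s) * (1/((m:ℝ)+1))) * ((m:ℝ)+1) ^ (1-s) := this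
        _ = ((m:ℝ)+1) ^ (1-s) + (1-s) * (((m:ℝ)+1) ^ (1-s) / ((m:ℝ)+1)) := by ring
        _ = ((m:ℝ)+1) ^ (1-s) + (1-s) * ((m:ℝ)+1) ^ (-s) := by rw [hpow]
    have hs3 : (0:ℝ) < 1 - s := by linarith
    push_cast
    calc (((m:ℝ)+1+1) ^ (1-s) - 1) / (1-s)
        ≤ ((((m:ℝ)+1) ^ (1-s) - 1) + (1-s) * ((m:ℝ)+1) ^ (-s)) / (1-s) := by
          gcongr
          linarith [hstep]
      _ = (((m:ℝ)+1) ^ (1-s) - 1) / (1-s) + ((m:ℝ)+1) ^ (-s) := by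
          field_simp
      _ ≤ (∑ x ∈ range m, ((x:ℝ)+1) ^ (-s)) + ((m:ℝ)+1) ^ (-s) := by linarith [ih]

lemma sum_rpow_lb2 {s : ℝ} (hs1 : 1/2 < s) (hs2 : s ≤ 3/4) (m : ℕ) :
    (1 - ((m:ℝ)+1) ^ (1-2*s)) / (2*s-1) ≤ ∑ k ∈ range m, ((k:ℝ)+1) ^ (-(2*s)) := by
  have hq1 : (-1:ℝ) ≤ 1-2*s := by linarith
  have hq2 : (1-2*s:ℝ) ≤ 0 := by linarith
  have hs3 : (0:ℝ) < 2*s-1 := by linarith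
  induction m with
  | zero => simp
  | succ m ih =>
    rw [Finset.sum_range_succ]
    have hm1 : (0:ℝ) < (m:ℝ) + 1 := by positivity
    have hstep : ((m:ℝ)+1) ^ (1-2*s) - ((m:ℝ)+1+1) ^ (1-2*s)
        ≤ (2*s-1) * ((m:ℝ)+1) ^ (-(2*s)) := by
      have hb := bernoulli_neg (x := 1/((m:ℝ)+1)) (p := 1-2*s)
        (by positivity) hq1 hq2
      have h1 : (1 + 1/((m:ℝ)+1)) = ((m:ℝ)+1+1)/((m:ℝ)+1) := by field_simp
      rw [h1, Real.div_rpow (by linarith) hm1.le] at hb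
      have hpos : (0:ℝ) < ((m:ℝ)+1) ^ (1-2*s) := Real.rpow_pos_of_pos hm1 _
      have hmul := mul_le_mul_of_nonneg_right hb hpos.le
      rw [div_mul_cancel₀ _ hpos.ne'] at hmul
      have hpow : ((m:ℝ)+1) ^ (1-2*s) / ((m:ℝ)+1) = ((m:ℝ)+1) ^ (-(2*s)) := by
        rw [eq_comm, show (-(2*s)) = (1-2*s) - 1 by ring, Real.rpow_sub hm1, Real.rpow_one]
      have hid : (1 + (1-2*s) * (1/((m:ℝ)+1))) * ((m:ℝ)+1) ^ (1-2*s)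
          = ((m:ℝ)+1) ^ (1-2*s) + (1-2*s) * (((m:ℝ)+1) ^ (1-2*s) / ((m:ℝ)+1)) := by ring
      rw [hid, hpow] at hmul
      linarith [hmul]
    push_cast
    calc (1 - ((m:ℝ)+1+1) ^ (1-2*s)) / (2*s-1)
        ≤ ((1 - ((m:ℝ)+1) ^ (1-2*s)) + (2*s-1) * ((m:ℝ)+1) ^ (-(2*s))) / (2*s-1) := by
          gcongr
          linarith [hstep]
      _ = (1 - ((m:ℝ)+1) ^ (1-2*s)) / (2*s-1) + ((m:ℝ)+1) ^ (-(2*s)) := by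
          field_simp
      _ ≤ (∑ x ∈ range m, ((x:ℝ)+1) ^ (-(2*s))) + ((m:ℝ)+1) ^ (-(2*s)) := by linarith [ih]

lemma summable_shift {p : ℝ} (hp : p < -1) :
    Summable (fun n : ℕ => ((n:ℝ)+1) ^ p) := by
  have h := (Real.summable_nat_rpow (p := p)).2 hp
  have h2 := (summable_nat_add_iff 1).2 h
  refine h2.congr fun n => ?_
  congr 1
  push_cast
  ring

lemma lp_norm_mono {E F : ℕ → Type*} [∀ i, NormedAddCommGroup (E i)]
    [∀ i, NormedAddCommGroup (F i)]
    (f : lp E 2) (g : lp F 2) (h : ∀ n, ‖f n‖ ≤ ‖g n‖) : ‖f‖ ≤ ‖g‖ := by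
  have hp : (0:ℝ) < (2:ℝ≥0∞).toReal := by norm_num
  have hsum : ∑' n, ‖f n‖ ^ (2:ℝ≥0∞).toReal ≤ ∑' n, ‖g n‖ ^ (2:ℝ≥0∞).toReal :=
    Summable.tsum_le_tsum (fun n => Real.rpow_le_rpow (norm_nonneg _) (h n) hp.le)
      ((lp.memℓp f).summable hp) ((lp.memℓp g).summable hp)
  rw [← lp.norm_rpow_eq_tsum hp f, ← lp.norm_rpow_eq_tsum hp g] at hsum
  exact (Real.rpow_le_rpow_iff (lp.norm_nonneg' f) (lp.norm_nonneg' g) hp).1 hsum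

lemma memℓp2_real {p : ℝ} (hp : p < -1/2) :
    Memℓp (fun n : ℕ => ((n:ℝ)+1) ^ (p)) (2:ℝ≥0∞) := by
  apply memℓp_gen
  have h2 : ((2:ℝ≥0∞)).toReal = (2:ℝ) := by norm_num
  rw [h2]
  refine (summable_shift (p := 2*p) (by linarith)).congr fun n => ?_
  have hm1 : (0:ℝ) < (n:ℝ) + 1 := by positivity
  rw [Real.norm_eq_abs, abs_of_nonneg (Real.rpow_nonneg hm1.le _), ← Real.rpow_mul hm1.le]
  ring_nf

lemma memℓp2_complex {p : ℝ} (hp : p < -1/2) :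
    Memℓp (fun n : ℕ => ((((n:ℝ)+1) ^ (p) : ℝ) : ℂ)) (2:ℝ≥0∞) := by
  apply memℓp_gen
  have h2 : ((2:ℝ≥0∞)).toReal = (2:ℝ) := by norm_num
  rw [h2]
  refine (summable_shift (p := 2*p) (by linarith)).congr fun n => ?_
  have hm1 : (0:ℝ) < (n:ℝ) + 1 := by positivity
  rw [Complex.norm_real, Real.norm_eq_abs, abs_of_nonneg (Real.rpow_nonneg hm1.le _), ← Real.rpow_mul hm1.le]
  ring_nf

variable {s : ℝ}

def Xre (s : ℝ) (hs1 : 1/2 < s) : lp (fun _ : ℕ => ℝ) 2 :=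
  ⟨fun n => ((n:ℝ)+1) ^ (-s), memℓp2_real (by linarith)⟩

def Yre : lp (fun _ : ℕ => ℝ) 2 :=
  ⟨fun n => ((n:ℝ)+1) ^ (-(1:ℝ)), memℓp2_real (by norm_num)⟩

def Xc (s : ℝ) (hs1 : 1/2 < s) : H2 :=
  ⟨fun n => ((((n:ℝ)+1) ^ (-s) : ℝ) : ℂ), memℓp2_complex (by linarith)⟩

lemma norm_Xc_eq (hs1 : 1/2 < s) : ‖Xc s hs1‖ = ‖Xre s hs1‖ := by
  have h : ∀ n : ℕ, ‖(Xc s hs1 : ∀ _ : ℕ, ℂ) n‖ = ‖(Xre s hs1 : ∀ _ : ℕ, ℝ) n‖ := fun n => by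
    show ‖((((n:ℝ)+1) ^ (-s) : ℝ) : ℂ)‖ = ‖((n:ℝ)+1) ^ (-s)‖
    rw [Complex.norm_real]
  exact le_antisymm (lp_norm_mono _ _ fun n => (h n).le)
    (lp_norm_mono _ _ fun n => (h n).ge)

lemma norm_cesOp_Xc_apply (hs1 : 1/2 < s) (n : ℕ) :
    ‖(cesOp (Xc s hs1) : ∀ _ : ℕ, ℂ) n‖
      = (∑ k ∈ range (n+1), ((k:ℝ)+1) ^ (-s)) / ((n:ℝ)+1) := by
  rw [cesOp_apply]
  have hsum : (∑ k ∈ range (n+1), (Xc s hs1 : ∀ _ : ℕ, ℂ) k)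
      = (((∑ k ∈ range (n+1), ((k:ℝ)+1) ^ (-s) : ℝ)) : ℂ) := by
    rw [Complex.ofReal_sum]
    rfl
  rw [hsum, norm_div]
  have h1 : ‖(n : ℂ) + 1‖ = (n : ℝ) + 1 := by
    have : ((n : ℂ) + 1) = ((n + 1 : ℕ) : ℂ) := by push_cast; ring
    rw [this, Complex.norm_natCast]; push_cast; ring
  rw [h1, Complex.norm_real, Real.norm_eq_abs,
    abs_of_nonneg (Finset.sum_nonneg fun k _ => Real.rpow_nonneg (by positivity) _)]

lemma pointwise_lb (hs1 : 1/2 < s) (hs2 : s ≤ 3/4) (n : ℕ) :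
    (((n:ℝ)+1) ^ (-s) - ((n:ℝ)+1) ^ (-(1:ℝ))) / (1-s)
      ≤ ‖(cesOp (Xc s hs1) : ∀ _ : ℕ, ℂ) n‖ := by
  rw [norm_cesOp_Xc_apply hs1 n]
  have hm1 : (0:ℝ) < (n:ℝ) + 1 := by positivity
  have hs3 : (0:ℝ) < 1 - s := by linarith
  have h1 := sum_rpow_lb (s := s) (by linarith) (by linarith) (n+1)
  push_cast at h1
  have h2 : ((n:ℝ)+1) ^ (1-s) ≤ ((n:ℝ)+1+1) ^ (1-s) :=
    Real.rpow_le_rpow hm1.le (by linarith) (by linarith)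
  have h3 : (((n:ℝ)+1) ^ (1-s) - 1) / (1-s) ≤ ∑ k ∈ range (n+1), ((k:ℝ)+1) ^ (-s) := by
    refine le_trans ?_ h1
    gcongr
  have h4 : ((((n:ℝ)+1) ^ (1-s) - 1) / (1-s)) / ((n:ℝ)+1)
      = (((n:ℝ)+1) ^ (-s) - ((n:ℝ)+1) ^ (-(1:ℝ))) / (1-s) := by
    have hp1 : ((n:ℝ)+1) ^ (1-s) / ((n:ℝ)+1) = ((n:ℝ)+1) ^ (-s) := by
      rw [eq_comm, show (-s) = (1-s) - 1 by ring, Real.rpow_sub hm1, Real.rpow_one]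
    have hp2 : ((n:ℝ)+1) ^ (-(1:ℝ)) = 1 / ((n:ℝ)+1) := by
      rw [Real.rpow_neg_one]; exact inv_eq_one_div _
    rw [hp2, ← hp1, div_sub_div_same, div_div, div_div, mul_comm]
  rw [← h4]
  gcongr

lemma norm_cesOp_Xc_ge (hs1 : 1/2 < s) (hs2 : s ≤ 3/4) :
    (‖Xre s hs1‖ - ‖Yre‖) / (1-s) ≤ ‖cesOp (Xc s hs1)‖ := by
  have hs3 : (0:ℝ) < 1 - s := by linarith
  set u : lp (fun _ : ℕ => ℝ) 2 := (1-s)⁻¹ • (Xre s hs1 - Yre) with hu_def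
  have hXY : ∀ n : ℕ, (Yre : ∀ _ : ℕ, ℝ) n ≤ (Xre s hs1 : ∀ _ : ℕ, ℝ) n := by
    intro n
    show ((n:ℝ)+1) ^ (-(1:ℝ)) ≤ ((n:ℝ)+1) ^ (-s)
    exact Real.rpow_le_rpow_of_exponent_le (by push_cast; linarith [Nat.cast_nonneg (α := ℝ) n])
      (by linarith)
  have hu : ∀ n, ‖(u : ∀ _ : ℕ, ℝ) n‖ ≤ ‖(cesOp (Xc s hs1) : ∀ _ : ℕ, ℂ) n‖ := by
    intro n
    have hval : (u : ∀ _ : ℕ, ℝ) n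
        = (1-s)⁻¹ * ((Xre s hs1 : ∀ _ : ℕ, ℝ) n - (Yre : ∀ _ : ℕ, ℝ) n) := by
      rw [hu_def, lp.coeFn_smul, Pi.smul_apply, lp.coeFn_sub, Pi.sub_apply, smul_eq_mul]
    rw [Real.norm_eq_abs, hval, abs_of_nonneg
      (mul_nonneg (by positivity) (by linarith [hXY n]))]
    have := pointwise_lb hs1 hs2 n
    rw [div_eq_inv_mul] at this
    exact this
  have h1 : ‖u‖ ≤ ‖cesOp (Xc s hs1)‖ := lp_norm_mono _ _ hu
  have h2 : ‖u‖ = (1-s)⁻¹ * ‖Xre s hs1 - Yre‖ := by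
    rw [hu_def, norm_smul, Real.norm_eq_abs, abs_of_pos (by positivity)]
  have h3 : ‖Xre s hs1‖ - ‖Yre‖ ≤ ‖Xre s hs1 - Yre‖ := norm_sub_norm_le _ _
  calc (‖Xre s hs1‖ - ‖Yre‖) / (1-s) = (1-s)⁻¹ * (‖Xre s hs1‖ - ‖Yre‖) := by
        rw [div_eq_inv_mul]
    _ ≤ (1-s)⁻¹ * ‖Xre s hs1 - Yre‖ := by
        exact mul_le_mul_of_nonneg_left h3 (by positivity)
    _ = ‖u‖ := h2.symm
    _ ≤ ‖cesOp (Xc s hs1)‖ := h1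

lemma norm_Xre_sq (hs1 : 1/2 < s) (hs2 : s ≤ 3/4) :
    1/(2*(2*s-1)) ≤ ‖Xre s hs1‖ ^ 2 := by
  have hs3 : (0:ℝ) < 2*s-1 := by linarith
  obtain ⟨m, hm⟩ := exists_nat_gt ((2:ℝ) ^ ((2*s-1)⁻¹))
  have hc : (0:ℝ) < (2:ℝ) ^ ((2*s-1)⁻¹) := Real.rpow_pos_of_pos two_pos _
  have hm1 : (0:ℝ) < (m:ℝ) + 1 := by positivity
  have h1 : (2:ℝ) ≤ ((m:ℝ)+1) ^ (2*s-1) := by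
    calc (2:ℝ) = ((2:ℝ) ^ ((2*s-1)⁻¹)) ^ (2*s-1) := by
          rw [← Real.rpow_mul (by norm_num), inv_mul_cancel₀ hs3.ne', Real.rpow_one]
      _ ≤ ((m:ℝ)+1) ^ (2*s-1) := Real.rpow_le_rpow hc.le (by linarith) hs3.le
  have h2 : ((m:ℝ)+1) ^ (1-2*s) ≤ 1/2 := by
    rw [show (1-2*s) = -(2*s-1) by ring, Real.rpow_neg hm1.le]
    rw [show (1:ℝ)/2 = 2⁻¹ by norm_num]
    exact inv_anti₀ (by norm_num) h1
  have h3 : 1/(2*(2*s-1)) ≤ (1 - ((m:ℝ)+1) ^ (1-2*s)) / (2*s-1) := by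
    rw [div_le_div_iff₀ (by positivity) hs3]
    nlinarith [h2, hs3]
  have h4 := sum_rpow_lb2 hs1 hs2 m
  have hp : (0:ℝ) < (2:ℝ≥0∞).toReal := by norm_num
  have h5 : ∑ k ∈ range m, ((k:ℝ)+1) ^ (-(2*s))
      ≤ ∑' n : ℕ, ‖(Xre s hs1 : ∀ _ : ℕ, ℝ) n‖ ^ (2:ℝ≥0∞).toReal := by
    have heq : ∀ k : ℕ, ((k:ℝ)+1) ^ (-(2*s)) = ‖(Xre s hs1 : ∀ _ : ℕ, ℝ) k‖ ^ (2:ℝ≥0∞).toReal := by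
      intro k
      have hk1 : (0:ℝ) < (k:ℝ) + 1 := by positivity
      show ((k:ℝ)+1) ^ (-(2*s)) = ‖((k:ℝ)+1) ^ (-s)‖ ^ (2:ℝ≥0∞).toReal
      rw [show ((2:ℝ≥0∞)).toReal = (2:ℝ) by norm_num, Real.norm_eq_abs,
        abs_of_nonneg (Real.rpow_nonneg hk1.le _), ← Real.rpow_mul hk1.le]
      ring_nf
    calc ∑ k ∈ range m, ((k:ℝ)+1) ^ (-(2*s))
        = ∑ k ∈ range m, ‖(Xre s hs1 : ∀ _ : ℕ, ℝ) k‖ ^ (2:ℝ≥0∞).toReal :=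
          Finset.sum_congr rfl fun k _ => heq k
      _ ≤ ∑' n : ℕ, ‖(Xre s hs1 : ∀ _ : ℕ, ℝ) n‖ ^ (2:ℝ≥0∞).toReal :=
          Summable.sum_le_tsum _ (fun k _ => by positivity) ((lp.memℓp _).summable hp)
  have h6 := lp.norm_rpow_eq_tsum hp (Xre s hs1)
  have h7 : ‖Xre s hs1‖ ^ (2:ℝ≥0∞).toReal = ‖Xre s hs1‖ ^ 2 := by
    rw [show ((2:ℝ≥0∞)).toReal = (2:ℝ) by norm_num, Real.rpow_two]
  rw [h7] at h6
  rw [← h6] at h5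
  linarith [h3.trans (h4.trans h5)]

set_option maxHeartbeats 1000000 in
lemma cesOp_norm_ge : (2:ℝ) ≤ ‖cesOp‖ := by
  refine le_of_forall_pos_le_add fun ε hε => ?_
  rcases le_or_gt 2 ε with hbig | hε2
  · linarith [norm_nonneg cesOp]
  set K := ‖Yre‖ with hK
  have hK0 : (0:ℝ) ≤ K := norm_nonneg _
  set t : ℝ := min (1/2) (ε/(4*(K+1))) with ht
  have ht0 : 0 < t := lt_min (by norm_num) (by positivity)
  have ht1 : t ≤ 1/2 := min_le_left _ _
  have hte : t ≤ ε/(4*(K+1)) := min_le_right _ _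
  have hte' : 4*t*(K+1) ≤ ε := by
    have h := (le_div_iff₀ (by positivity : (0:ℝ) < 4*(K+1))).1 hte
    linarith [h]
  clear_value K t
  clear hte ht
  have hs1 : 1/2 < 1/2 + t^2 := by nlinarith
  have hs2 : 1/2 + t^2 ≤ 3/4 := by nlinarith
  set N := ‖Xre (1/2 + t^2) hs1‖ with hN
  have hN0 : (0:ℝ) ≤ N := norm_nonneg _
  have hNsq : 1/(2*(2*(1/2 + t^2)-1)) ≤ N^2 := norm_Xre_sq hs1 hs2
  have hNsq' : 1 ≤ (2*t*N)^2 := by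
    have h2 : (0:ℝ) < 2*(2*(1/2 + t^2)-1) := by nlinarith
    rw [div_le_iff₀ h2] at hNsq
    nlinarith [hNsq]
  have hNlb : 1 ≤ 2*t*N := by
    nlinarith [mul_nonneg (mul_nonneg (by norm_num : (0:ℝ) ≤ 2) ht0.le) hN0, hNsq']
  have hs3 : (0:ℝ) < 1 - (1/2 + t^2) := by nlinarith
  have hmain : N - K ≤ (1 - (1/2 + t^2)) * (‖cesOp‖ * N) := by
    have h1 := norm_cesOp_Xc_ge hs1 hs2
    have h2 : ‖cesOp (Xc (1/2 + t^2) hs1)‖ ≤ ‖cesOp‖ * N := by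
      calc ‖cesOp (Xc (1/2 + t^2) hs1)‖ ≤ ‖cesOp‖ * ‖Xc (1/2 + t^2) hs1‖ :=
            cesOp.le_opNorm _
        _ = ‖cesOp‖ * N := by rw [norm_Xc_eq hs1, ← hN]
    have h3 := h1.trans h2
    rw [div_le_iff₀ hs3] at h3
    rw [← hN, ← hK] at h3
    linarith [h3]
  clear_value N
  by_contra hcon
  push_neg at hcon
  have hOp0 : (0:ℝ) ≤ ‖cesOp‖ := norm_nonneg _
  have hOplt : ‖cesOp‖ < 2 - ε := by linarith
  have hcoef : (0:ℝ) ≤ 1/2 - t^2 := by nlinarith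
  have stepA : (1 - (1/2 + t^2)) * (‖cesOp‖ * N) ≤ (1/2 - t^2) * ((2-ε) * N) := by
    have : (1 - (1/2 + t^2)) = 1/2 - t^2 := by ring
    rw [this]
    exact mul_le_mul_of_nonneg_left
      (mul_le_mul_of_nonneg_right hOplt.le hN0) hcoef
  have stepB : (1/2 - t^2) * (2-ε) ≤ 1 - ε/2 := by nlinarith [sq_nonneg t]
  have stepB' : (1/2 - t^2) * ((2-ε) * N) ≤ (1 - ε/2) * N := by
    have h := mul_le_mul_of_nonneg_right stepB hN0
    rw [mul_assoc] at h
    exact h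
  have hεN : ε/2 * N ≤ K := by nlinarith [hmain, stepA, stepB']
  -- multiply hNlb by ε, hεN by 4t
  have h5 : ε ≤ 2*t*N*ε := by nlinarith [hNlb, hε.le]
  have h6 : 2*t*N*ε ≤ 4*t*K := by nlinarith [hεN, ht0.le]
  linarith [hte', h5, h6, ht0]

/-- The Cesàro matrix operator on `ℓ²`, sending `(aₙ)` to the sequence of Cesàro means
`((a₀ + ⋯ + aₙ)/(n+1))`, is a bounded linear operator of operator norm exactly `2`. -/
theorem cesaro_l2_bounded_norm_two :
    ∃ C : lp (fun _ : ℕ => ℂ) 2 →L[ℂ] lp (fun _ : ℕ => ℂ) 2,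
      (∀ (a : lp (fun _ : ℕ => ℂ) 2) (n : ℕ),
        (C a : ∀ _ : ℕ, ℂ) n = (∑ k ∈ Finset.range (n + 1), (a : ∀ _ : ℕ, ℂ) k) / ((n : ℂ) + 1)) ∧
      ‖C‖ = 2 := by
  exact ⟨cesOp, fun a n => cesOp_apply a n, le_antisymm cesOp_norm_le cesOp_norm_ge⟩
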